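/- The function F satisfies F(1) > γ/(γ + θ_max) > 0, where θ_max = max_{x∈[0,A]} θ(x). -/

import Mathlib

open MeasureTheory Real Set Filter

/-- `Λ(x,s) = ∫_s^x θ(t) dt`. -/
noncomputable def Lam (θ : ℝ → ℝ) (x s : ℝ) : ℝ := ∫ t in s..x, θ t

/-- `w(x;Q) = Q e^{-γx} ∫₀^x e^{γs} θ(s) e^{-Q Λ(x,s)} ds`. -/
noncomputable def w (γ : ℝ) (θ : ℝ → ℝ) (Q x : ℝ) : ℝ :=
  Q * Real.exp (-γ * x) * ∫ s in (0:ℝ)..x, Real.exp (γ * s) * θ s * Real.exp (-Q * Lam θ x s)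
/-- The kernel `k(x,s) = (p(x)/N)·θ(s)·e^{-γ(x-s)}`. -/
noncomputable def kker (γ N : ℝ) (p θ : ℝ → ℝ) (x s : ℝ) : ℝ :=
  (p x / N) * θ s * Real.exp (-γ * (x - s))

/-- The triangle `Ω = {(x,s) : 0 ≤ s ≤ x ≤ A}` (first coordinate `x`, second `s`). -/
def Tri (A : ℝ) : Set (ℝ × ℝ) := {q | 0 ≤ q.2 ∧ q.2 ≤ q.1 ∧ q.1 ≤ A}

/-- Basic reproductive number `R₀ = ∬_Ω k(x,s) d(s,x)`. -/
noncomputable def R0 (γ N A : ℝ) (p θ : ℝ → ℝ) : ℝ :=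
  ∫ q in Tri A, kker γ N p θ q.1 q.2

/-- `F(Q) = 1 - ∬_Ω k(x,s) e^{-Q Λ(x,s)} d(s,x)`. -/
noncomputable def FF (γ N A : ℝ) (p θ : ℝ → ℝ) (Q : ℝ) : ℝ :=
  1 - ∫ q in Tri A, kker γ N p θ q.1 q.2 * Real.exp (-Q * Lam θ q.1 q.2)

/-- Iteration map `T(Q) = Q·(1 - F(Q))`. -/
noncomputable def TT (γ N A : ℝ) (p θ : ℝ → ℝ) (Q : ℝ) : ℝ :=
  Q * (1 - FF γ N A p θ Q)

/-!
Since `Λ(x,s) ≤ θ_max (x - s)`, the discount `e^{-γ(x-s)}` is at most `e^{-(γ/θ_max) Λ(x,s)}`, so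
for `Q ≥ 0` and `c = (γ + Q θ_max)/θ_max` the inner integral is bounded by
`∫₀^x θ(s) e^{-c Λ(x,s)} ds = (1 - e^{-c Λ(x,0)})/c`, an exact derivative, and
`Λ(x,0) ≤ θ_max A` keeps this uniformly below `1/c`. Averaging against the probability density
`p/N` gives `∬_Ω k e^{-QΛ} < θ_max/(γ + Q θ_max)`, which is the claim at `Q = 1`. For the
fundamental theorem of calculus `θ` and `p` are first extended continuously from `[0,A]` to `ℝ`,
which does not change `F`.
-/

lemma isClosed_Tri (A : ℝ) : IsClosed (Tri A) :=
  (isClosed_le continuous_const continuous_snd).inter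
    ((isClosed_le continuous_snd continuous_fst).inter
      (isClosed_le continuous_fst continuous_const))

lemma measurableSet_Tri (A : ℝ) : MeasurableSet (Tri A) := (isClosed_Tri A).measurableSet

lemma isCompact_Tri (A : ℝ) : IsCompact (Tri A) :=
  (isCompact_Icc.prod isCompact_Icc).of_isClosed_subset (isClosed_Tri A)
    fun _ ⟨h0s, hsx, hxA⟩ => ⟨⟨h0s.trans hsx, hxA⟩, ⟨h0s, hsx.trans hxA⟩⟩

lemma integral_indicator_Tri_slice {A : ℝ} (f : ℝ × ℝ → ℝ) (x : ℝ) :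
    ∫ s, (Tri A).indicator f (x, s) = (Icc 0 A).indicator (fun x => ∫ s in 0..x, f (x, s)) x := by
  by_cases hx : x ∈ Icc 0 A
  · have hslice :
        (fun s => (Tri A).indicator f (x, s)) = (Icc 0 x).indicator (fun s => f (x, s)) := by
      ext s
      by_cases hs : s ∈ Icc 0 x
      · rw [indicator_of_mem hs, indicator_of_mem (show (x, s) ∈ Tri A from ⟨hs.1, hs.2, hx.2⟩)]
      · rw [indicator_of_notMem hs, indicator_of_notMem fun h => hs ⟨h.1, h.2.1⟩]
    rw [indicator_of_mem hx, hslice, integral_indicator measurableSet_Icc,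
      intervalIntegral.integral_of_le hx.1, integral_Icc_eq_integral_Ioc]
  · have hslice : (fun s => (Tri A).indicator f (x, s)) = 0 := by
      ext s
      exact indicator_of_notMem (fun h => hx ⟨h.1.trans h.2.1, h.2.2⟩) _
    rw [indicator_of_notMem hx, hslice, Pi.zero_def, integral_zero]

lemma setIntegral_Tri {A : ℝ} (hA : 0 ≤ A) {f : ℝ × ℝ → ℝ} (hf : Continuous f) :
    ∫ q in Tri A, f q = ∫ x in 0..A, ∫ s in 0..x, f (x, s) := by
  have hint : Integrable ((Tri A).indicator f) :=
    (integrable_indicator_iff (measurableSet_Tri A)).2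
      (hf.continuousOn.integrableOn_compact (μ := volume) (isCompact_Tri A))
  rw [← integral_indicator (measurableSet_Tri A), Measure.volume_eq_prod,
    integral_prod _ (by rwa [← Measure.volume_eq_prod])]
  simp only [integral_indicator_Tri_slice]
  rw [integral_indicator measurableSet_Icc, intervalIntegral.integral_of_le hA,
    integral_Icc_eq_integral_Ioc]

lemma continuous_Lam {θ : ℝ → ℝ} (hθ : Continuous θ) :
    Continuous fun q : ℝ × ℝ => Lam θ q.1 q.2 := by
  have hprim :=
    intervalIntegral.continuous_primitive (fun a b => hθ.intervalIntegrable (μ := volume) a b) 0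
  have hLam : (fun q : ℝ × ℝ => Lam θ q.1 q.2) =
      fun q => (∫ t in 0..q.1, θ t) - ∫ t in 0..q.2, θ t := by
    ext q
    exact (intervalIntegral.integral_interval_sub_left (hθ.intervalIntegrable _ _)
      (hθ.intervalIntegrable _ _)).symm
  rw [hLam]
  exact (hprim.comp continuous_fst).sub (hprim.comp continuous_snd)

lemma Lam_self (θ : ℝ → ℝ) (x : ℝ) : Lam θ x x = 0 := intervalIntegral.integral_same

lemma Lam_le {θ : ℝ → ℝ} {s x M : ℝ} (hθi : IntervalIntegrable θ volume s x) (hsx : s ≤ x)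
    (hθ : ∀ t ∈ Icc s x, θ t ≤ M) : Lam θ x s ≤ M * (x - s) := by
  have h := intervalIntegral.integral_mono_on hsx hθi intervalIntegrable_const hθ
  rwa [intervalIntegral.integral_const, smul_eq_mul, mul_comm] at h

lemma hasDerivAt_Lam_snd {θ : ℝ → ℝ} (hθ : Continuous θ) (x s : ℝ) :
    HasDerivAt (fun s => Lam θ x s) (-θ s) s :=
  intervalIntegral.integral_hasDerivAt_left (hθ.intervalIntegrable _ _)
    (hθ.stronglyMeasurableAtFilter _ _) hθ.continuousAt

lemma integral_mul_exp_neg_mul_Lam {θ : ℝ → ℝ} (hθ : Continuous θ) {c : ℝ} (hc : c ≠ 0)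
    (a b : ℝ) :
    ∫ s in a..b, θ s * exp (-c * Lam θ b s) = (1 - exp (-c * Lam θ b a)) / c := by
  have hderiv :
      ∀ s, HasDerivAt (fun s => exp (-c * Lam θ b s) / c) (θ s * exp (-c * Lam θ b s)) s :=
    fun s => (((hasDerivAt_Lam_snd hθ b s).const_mul (-c)).exp.div_const c).congr_deriv
      (by field_simp)
  have hcont : Continuous fun s => θ s * exp (-c * Lam θ b s) :=
    hθ.mul (continuous_exp.comp (continuous_const.mul
      ((continuous_Lam hθ).comp (continuous_const.prodMk continuous_id))))
  rw [intervalIntegral.integral_eq_sub_of_hasDerivAt (fun s _ => hderiv s)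
    (hcont.intervalIntegrable a b), Lam_self, mul_zero, exp_zero, sub_div]

lemma exp_neg_mul_mul_exp_le {γ M Q d L : ℝ} (hγ : 0 ≤ γ) (hM : 0 < M) (hL : L ≤ M * d) :
    exp (-γ * d) * exp (-Q * L) ≤ exp (-((γ + Q * M) / M) * L) := by
  rw [← exp_add, exp_le_exp]
  have : γ * L / M ≤ γ * d := by
    rw [div_le_iff₀ hM]; nlinarith
  have hsplit : -((γ + Q * M) / M) * L = -(γ * L / M) - Q * L := by field_simp; ring
  linarith

lemma integral_mul_exp_mul_exp_Lam_le {θ : ℝ → ℝ} (hθ : Continuous θ) {γ Q M A x : ℝ}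
    (hγ : 0 < γ) (hQ : 0 ≤ Q) (hM : 0 < M)
    (hθ0 : ∀ t ∈ Icc 0 A, 0 ≤ θ t) (hθM : ∀ t ∈ Icc 0 A, θ t ≤ M) (hx : x ∈ Icc 0 A) :
    ∫ s in 0..x, θ s * exp (-γ * (x - s)) * exp (-Q * Lam θ x s) ≤
      (1 - exp (-(γ + Q * M) * A)) * (M / (γ + Q * M)) := by
  set c := (γ + Q * M) / M
  have hc : 0 < c := by positivity
  have hsub : ∀ s ∈ Icc 0 x, Icc s x ⊆ Icc 0 A :=
    fun s hs t ht => ⟨hs.1.trans ht.1, ht.2.trans hx.2⟩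
  have hLam_le : ∀ s ∈ Icc 0 x, Lam θ x s ≤ M * (x - s) :=
    fun s hs => Lam_le (hθ.intervalIntegrable _ _) hs.2 fun t ht => hθM t (hsub s hs ht)
  have hL : Continuous fun s => Lam θ x s :=
    (continuous_Lam hθ).comp (continuous_const.prodMk continuous_id)
  calc ∫ s in 0..x, θ s * exp (-γ * (x - s)) * exp (-Q * Lam θ x s)
      ≤ ∫ s in 0..x, θ s * exp (-c * Lam θ x s) := by
        refine intervalIntegral.integral_mono_on hx.1 (Continuous.intervalIntegrable ?_ _ _)
          (Continuous.intervalIntegrable ?_ _ _) fun s hs => ?_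
        · fun_prop
        · fun_prop
        · rw [mul_assoc]
          exact mul_le_mul_of_nonneg_left (exp_neg_mul_mul_exp_le hγ.le hM (hLam_le s hs))
            (hθ0 s (hsub s hs ⟨le_rfl, hs.2⟩))
    _ = (1 - exp (-c * Lam θ x 0)) / c := integral_mul_exp_neg_mul_Lam hθ hc.ne' 0 x
    _ ≤ (1 - exp (-(γ + Q * M) * A)) * (M / (γ + Q * M)) := by
        have hcL : c * Lam θ x 0 ≤ (γ + Q * M) * A :=
          calc c * Lam θ x 0 ≤ c * (M * x) := by
                simpa using mul_le_mul_of_nonneg_left (hLam_le 0 ⟨le_rfl, hx.1⟩) hc.le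
            _ = (γ + Q * M) * x := by simp only [c]; field_simp
            _ ≤ (γ + Q * M) * A := by gcongr; exact hx.2
        have hexp := exp_le_exp.2 (show -(γ + Q * M) * A ≤ -c * Lam θ x 0 by linarith)
        rw [div_eq_mul_inv, inv_div]
        exact mul_le_mul_of_nonneg_right (by linarith) (by positivity)

theorem setIntegral_kker_mul_exp_neg_Lam_lt {γ N A Q M : ℝ} {p θ : ℝ → ℝ}
    (hγ : 0 < γ) (hN : 0 < N) (hA : 0 ≤ A) (hQ : 0 ≤ Q) (hM : 0 < M)
    (hθ : Continuous θ) (hp : Continuous p)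
    (hθ0 : ∀ t ∈ Icc 0 A, 0 ≤ θ t) (hθM : ∀ t ∈ Icc 0 A, θ t ≤ M)
    (hp0 : ∀ t ∈ Icc 0 A, 0 ≤ p t) (hpN : ∫ x in 0..A, p x = N) :
    ∫ q in Tri A, kker γ N p θ q.1 q.2 * exp (-Q * Lam θ q.1 q.2) < M / (γ + Q * M) := by
  set B := (1 - exp (-(γ + Q * M) * A)) * (M / (γ + Q * M))
  have hL := continuous_Lam hθ
  have hcont : Continuous fun q : ℝ × ℝ => kker γ N p θ q.1 q.2 * exp (-Q * Lam θ q.1 q.2) := by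
    unfold kker; fun_prop
  have hinner : Continuous fun x =>
      ∫ s in 0..x, θ s * exp (-γ * (x - s)) * exp (-Q * Lam θ x s) :=
    intervalIntegral.continuous_parametric_intervalIntegral_of_continuous
      (f := fun x s => θ s * exp (-γ * (x - s)) * exp (-Q * Lam θ x s)) (by fun_prop)
      continuous_id
  calc ∫ q in Tri A, kker γ N p θ q.1 q.2 * exp (-Q * Lam θ q.1 q.2)
      = ∫ x in 0..A, p x / N * ∫ s in 0..x, θ s * exp (-γ * (x - s)) * exp (-Q * Lam θ x s) := by
        rw [setIntegral_Tri hA hcont]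
        congr 1; ext x
        rw [← intervalIntegral.integral_const_mul]
        simp only [kker, mul_assoc]
    _ ≤ ∫ x in 0..A, p x / N * B := by
        refine intervalIntegral.integral_mono_on hA (Continuous.intervalIntegrable ?_ _ _)
          (Continuous.intervalIntegrable ?_ _ _) fun x hx => ?_
        · fun_prop
        · fun_prop
        · exact mul_le_mul_of_nonneg_left
            (integral_mul_exp_mul_exp_Lam_le hθ hγ hQ hM hθ0 hθM hx) (div_nonneg (hp0 x hx) hN.le)
    _ = B := by
        rw [intervalIntegral.integral_mul_const, intervalIntegral.integral_div, hpN,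
          div_self hN.ne', one_mul]
    _ < M / (γ + Q * M) := mul_lt_of_lt_one_left (by positivity) (sub_lt_self _ (exp_pos _))

lemma FF_congr {γ N A : ℝ} {p p' θ θ' : ℝ → ℝ} (hp : EqOn p p' (Icc 0 A))
    (hθ : EqOn θ θ' (Icc 0 A)) (Q : ℝ) : FF γ N A p θ Q = FF γ N A p' θ' Q := by
  unfold FF
  congr 1
  refine setIntegral_congr_fun (measurableSet_Tri A) ?_
  rintro ⟨x, s⟩ ⟨h0s, hsx, hxA⟩
  have hLam : Lam θ x s = Lam θ' x s := intervalIntegral.integral_congr fun t ht => by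
    rw [uIcc_of_le hsx] at ht
    exact hθ ⟨h0s.trans ht.1, ht.2.trans hxA⟩
  simp only [kker, hLam, hp ⟨h0s.trans hsx, hxA⟩, hθ ⟨h0s, hsx.trans hxA⟩]

/-- `F(1) > γ/(γ + θ_max) > 0`. -/
theorem F_one (γ A N : ℝ) (hγ : 0 < γ) (hA : 0 < A) (hN : 0 < N)
    (θ p : ℝ → ℝ)
    (hθc : ContinuousOn θ (Set.Icc 0 A)) (hθpos : ∀ x ∈ Set.Icc 0 A, 0 < θ x)
    (hpc : ContinuousOn p (Set.Icc 0 A)) (hppos : ∀ x ∈ Set.Icc 0 A, 0 < p x)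
    (hnorm : (1/N) * ∫ x in (0:ℝ)..A, p x = 1)
    (θmax : ℝ) (hθmax : IsGreatest (θ '' Set.Icc 0 A) θmax) :
    γ / (γ + θmax) < FF γ N A p θ 1 ∧ 0 < γ / (γ + θmax) := by
  have h0A : (0 : ℝ) ∈ Icc 0 A := left_mem_Icc.2 hA.le
  have hθmax_pos : 0 < θmax := (hθpos 0 h0A).trans_le (hθmax.2 ⟨0, h0A, rfl⟩)
  refine ⟨?_, by positivity⟩
  set θ' := IccExtend hA.le (domRestrict (Icc 0 A) θ)
  set p' := IccExtend hA.le (domRestrict (Icc 0 A) p)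
  have hθθ' : EqOn θ θ' (Icc 0 A) :=
    fun t ht => (IccExtend_of_mem hA.le (domRestrict (Icc 0 A) θ) ht).symm
  have hpp' : EqOn p p' (Icc 0 A) :=
    fun t ht => (IccExtend_of_mem hA.le (domRestrict (Icc 0 A) p) ht).symm
  have hp'N : ∫ x in 0..A, p' x = N := by
    rw [← intervalIntegral.integral_congr (hpp'.mono (uIcc_of_le hA.le).subset)]
    field_simp at hnorm
    exact hnorm
  have key := setIntegral_kker_mul_exp_neg_Lam_lt (Q := 1) hγ hN hA.le zero_le_one hθmax_pos
    hθc.domRestrict.Icc_extend' hpc.domRestrict.Icc_extend'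
    (fun t ht => (hθpos t ht).le.trans_eq (hθθ' ht))
    (fun t ht => (hθθ' ht).symm.trans_le (hθmax.2 ⟨t, ht, rfl⟩))
    (fun t ht => (hppos t ht).le.trans_eq (hpp' ht)) hp'N
  rw [FF_congr hpp' hθθ', FF]
  have : γ / (γ + θmax) = 1 - θmax / (γ + 1 * θmax) := by field_simp; ring
  linarith
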